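/- Approximating-Hamiltonian identity for the strong-coupling BCS–Hubbard model: for every c ∈ ℂ, γ·|Λ|·|c|²·1 + H_Λ(c) − H_Λ = γ·(𝔠₀ − √|Λ|·c·1)*·(𝔠₀ − √|Λ|·c·1); in particular, the element γ·|Λ|·|c|²·1 + H_Λ(c) − H_Λ is a nonnegative (positive semidefinite) element of the C*-algebra 𝔄. -/

import Mathlib

/-! The interaction term of `H_Λ` is `−γ·𝔠₀*·𝔠₀` and the mean-field terms of `H_Λ(c)` are
`−γ·√|Λ|·(c·𝔠₀* + c̄·𝔠₀)`; the on-site terms cancel in `H_Λ(c) − H_Λ`, and adding the constant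
`γ·|Λ|·|c|²` completes the square. -/

noncomputable section

variable {A : Type*} [NormedRing A] [StarRing A] [CStarRing A] [CompleteSpace A]
  [NormedAlgebra ℂ A] [StarModule ℂ A] [PartialOrder A] [StarOrderedRing A]
variable {Λ : Type*} [Fintype Λ] [DecidableEq Λ]

/-- The on-site Hamiltonian
`h_x := 2λ·n_{x,↑}·n_{x,↓} − μ·(n_{x,↑}+n_{x,↓}) − h·(n_{x,↑}−n_{x,↓})`,
where `n_{x,s} := a_{x,s}*·a_{x,s}`, `↑ = true`, `↓ = false`. -/
def onSiteHam (a : Λ → Bool → A) (mu h lam : ℝ) (x : Λ) : A :=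
  (2 * lam : ℂ) • (star (a x true) * a x true * (star (a x false) * a x false))
    - (mu : ℂ) • (star (a x true) * a x true + star (a x false) * a x false)
    - (h : ℂ) • (star (a x true) * a x true - star (a x false) * a x false)

/-- The strong-coupling BCS–Hubbard Hamiltonian
`H_Λ := Σ_{x∈Λ} h_x − (γ/|Λ|)·Σ_{x,y∈Λ} a_{x,↑}*·a_{x,↓}*·a_{y,↓}·a_{y,↑}`. -/
def bcsHubbardHam (a : Λ → Bool → A) (mu h lam gam : ℝ) : A :=
  ∑ x, onSiteHam a mu h lam x
    - ((gam / (Fintype.card Λ : ℝ) : ℝ) : ℂ) •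
        ∑ x, ∑ y, star (a x true) * star (a x false) * (a y false * a y true)

/-- The approximating Hamiltonian
`H_Λ(c) := Σ_{x∈Λ} (h_x − γ·(c·a_{x,↑}*·a_{x,↓}* + c̄·a_{x,↓}·a_{x,↑}))`. -/
def bcsHubbardApproxHam (a : Λ → Bool → A) (mu h lam gam : ℝ) (c : ℂ) : A :=
  ∑ x, (onSiteHam a mu h lam x
    - (gam : ℂ) • (c • (star (a x true) * star (a x false))
        + (starRingEnd ℂ c) • (a x false * a x true)))

/-- The zero-mode Cooper-pair annihilation operator
`𝔠₀ := |Λ|^{−1/2}·Σ_{x∈Λ} a_{x,↓}·a_{x,↑}`. -/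
def cooperZeroMode (a : Λ → Bool → A) : A :=
  (((Real.sqrt (Fintype.card Λ : ℝ))⁻¹ : ℝ) : ℂ) • ∑ x, a x false * a x true

section StarAlgebra

variable {R B : Type*} [CommRing R] [StarRing R] [Ring B] [StarRing B] [Algebra R B]
  [StarModule R B]

theorem star_sub_smul_one_mul_sub_smul_one (b : B) (z : R) :
    star (b - z • (1 : B)) * (b - z • 1)
      = star b * b - z • star b - star z • b + (star z * z) • 1 := by
  simp only [star_sub, star_smul, star_one, sub_mul, mul_sub, smul_mul_assoc, mul_smul_comm,
    mul_one, one_mul, smul_sub, smul_smul]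
  rw [mul_comm z]
  abel

end StarAlgebra

section PairOperators

variable {ι R : Type*} [Fintype ι] [NonUnitalRing R] [StarRing R]

def pairAnnihilation (a : ι → Bool → R) : R :=
  ∑ x, a x false * a x true

theorem star_pairAnnihilation (a : ι → Bool → R) :
    star (pairAnnihilation a) = ∑ x, star (a x true) * star (a x false) := by
  simp only [pairAnnihilation, star_sum, star_mul]

theorem sum_sum_eq_star_pairAnnihilation_mul_self (a : ι → Bool → R) :
    ∑ x, ∑ y, star (a x true) * star (a x false) * (a y false * a y true)
      = star (pairAnnihilation a) * pairAnnihilation a := by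
  rw [star_pairAnnihilation, pairAnnihilation, Finset.sum_mul_sum]

end PairOperators

section Hamiltonians

variable {E ι : Type*} [NormedRing E] [NormedAlgebra ℂ E] [Fintype ι]

theorem cooperZeroMode_eq_smul_pairAnnihilation (a : ι → Bool → E) :
    cooperZeroMode a
      = (((Real.sqrt (Fintype.card ι : ℝ))⁻¹ : ℝ) : ℂ) • pairAnnihilation a :=
  rfl

variable [StarRing E]

theorem bcsHubbardApproxHam_sub_bcsHubbardHam (a : ι → Bool → E) (mu h lam gam : ℝ) (c : ℂ) :
    bcsHubbardApproxHam a mu h lam gam c - bcsHubbardHam a mu h lam gam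
      = ((gam / (Fintype.card ι : ℝ) : ℝ) : ℂ) • (star (pairAnnihilation a) * pairAnnihilation a)
        - (gam : ℂ) • (c • star (pairAnnihilation a) + starRingEnd ℂ c • pairAnnihilation a) := by
  rw [bcsHubbardApproxHam, bcsHubbardHam, sum_sum_eq_star_pairAnnihilation_mul_self,
    star_pairAnnihilation, pairAnnihilation]
  simp only [Finset.sum_sub_distrib, Finset.sum_add_distrib, Finset.smul_sum, smul_add]
  abel

end Hamiltonians

open scoped ComplexOrder in
theorem approximating_hamiltonian_identity_general [Nonempty Λ] (a : Λ → Bool → A)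
    (mu h lam gam : ℝ) (hgam : 0 ≤ gam) (c : ℂ) :
    ((gam * (Fintype.card Λ : ℝ) * ‖c‖ ^ 2 : ℝ) : ℂ) • (1 : A)
        + bcsHubbardApproxHam a mu h lam gam c - bcsHubbardHam a mu h lam gam
      = (gam : ℂ) •
          (star (cooperZeroMode a - ((Real.sqrt (Fintype.card Λ : ℝ) : ℂ) * c) • (1 : A))
            * (cooperZeroMode a - ((Real.sqrt (Fintype.card Λ : ℝ) : ℂ) * c) • (1 : A))) ∧
    0 ≤ ((gam * (Fintype.card Λ : ℝ) * ‖c‖ ^ 2 : ℝ) : ℂ) • (1 : A)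
        + bcsHubbardApproxHam a mu h lam gam c - bcsHubbardHam a mu h lam gam := by
  have hsqrt : ((Real.sqrt (Fintype.card Λ) : ℝ) : ℂ) ^ 2 = Fintype.card Λ := by
    exact_mod_cast Real.sq_sqrt (Nat.cast_nonneg _)
  have hsqrt_ne : ((Real.sqrt (Fintype.card Λ) : ℝ) : ℂ) ≠ 0 := by
    exact_mod_cast (Real.sqrt_pos.2 (Nat.cast_pos.2 Fintype.card_pos)).ne'
  have hsquare : ((gam * (Fintype.card Λ : ℝ) * ‖c‖ ^ 2 : ℝ) : ℂ) • (1 : A)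
        + bcsHubbardApproxHam a mu h lam gam c - bcsHubbardHam a mu h lam gam
      = (gam : ℂ) •
          (star (cooperZeroMode a - ((Real.sqrt (Fintype.card Λ : ℝ) : ℂ) * c) • (1 : A))
            * (cooperZeroMode a - ((Real.sqrt (Fintype.card Λ : ℝ) : ℂ) * c) • (1 : A))) := by
    rw [add_sub_assoc, bcsHubbardApproxHam_sub_bcsHubbardHam,
      star_sub_smul_one_mul_sub_smul_one, cooperZeroMode_eq_smul_pairAnnihilation]
    simp only [star_smul, smul_mul_smul_comm, smul_smul, Complex.star_def, map_mul,
      Complex.conj_ofReal]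
    match_scalars <;> push_cast [← hsqrt] <;> field_simp
    rw [mul_assoc, Complex.conj_mul']
  refine ⟨hsquare, hsquare ▸ smul_nonneg ?_ (star_mul_self_nonneg _)⟩
  exact_mod_cast hgam

/-- approximating-Hamiltonian identity for the strong-coupling
BCS–Hubbard model: for every `c ∈ ℂ`,
`γ·|Λ|·|c|²·1 + H_Λ(c) − H_Λ = γ·(𝔠₀ − √|Λ|·c·1)*·(𝔠₀ − √|Λ|·c·1)`;
in particular this element is nonnegative in the C*-algebra `A`. -/
theorem approximating_hamiltonian_identity [Nonempty Λ] (a : Λ → Bool → A)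
    (hCAR1 : ∀ (x y : Λ) (s t : Bool), a x s * a y t + a y t * a x s = 0)
    (hCAR2 : ∀ (x y : Λ) (s t : Bool),
      a x s * star (a y t) + star (a y t) * a x s
        = if s = t ∧ x = y then 1 else 0)
    (mu h lam gam : ℝ) (hgam : 0 ≤ gam) (c : ℂ) :
    ((gam * (Fintype.card Λ : ℝ) * ‖c‖ ^ 2 : ℝ) : ℂ) • (1 : A)
        + bcsHubbardApproxHam a mu h lam gam c - bcsHubbardHam a mu h lam gam
      = (gam : ℂ) •
          (star (cooperZeroMode a - ((Real.sqrt (Fintype.card Λ : ℝ) : ℂ) * c) • (1 : A))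
            * (cooperZeroMode a - ((Real.sqrt (Fintype.card Λ : ℝ) : ℂ) * c) • (1 : A))) ∧
    0 ≤ ((gam * (Fintype.card Λ : ℝ) * ‖c‖ ^ 2 : ℝ) : ℂ) • (1 : A)
        + bcsHubbardApproxHam a mu h lam gam c - bcsHubbardHam a mu h lam gam :=
  approximating_hamiltonian_identity_general a mu h lam gam hgam c
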